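/- Let G be a bipartite graph with positive integer edge weights and let G_1 be the unweighted graph consisting of the maximum-weight edges of G (each given weight 1). Then mwm(G) = mm(G_1) + mwm(G^Δ_1), where G^Δ_1 is the residual graph obtained from any minimum weight cover C_1 of G_1: its edges are the uv with w(u,v) − C_1(u) − C_1(v) > 0, weighted by that difference (with each edge of G_1 counted with its original weight reduced by N−1). -/

import Mathlib

open Finset

variable {V : Type*} [Fintype V] [DecidableEq V]

/-- `C` is a (weighted vertex) cover of the bipartite graph on parts `X`, `Y`
with edge weights `w` (where `w x y = 0` means no edge). -/
def IsCover (X Y : Finset V) (w : V → V → ℕ) (C : V → ℕ) : Prop :=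
  ∀ x ∈ X, ∀ y ∈ Y, w x y ≤ C x + C y

/-- The weight of a cover: the sum of its values over all nodes. -/
def coverWt (X Y : Finset V) (C : V → ℕ) : ℕ := ∑ u ∈ X ∪ Y, C u

/-- `M` is a matching of the weighted bipartite graph: a set of pairwise
node-disjoint edges, each going from `X` to `Y` with positive weight. -/
def IsBMatching (X Y : Finset V) (w : V → V → ℕ) (M : Finset (V × V)) : Prop :=
  (∀ e ∈ M, e.1 ∈ X ∧ e.2 ∈ Y ∧ 0 < w e.1 e.2) ∧
  (∀ e ∈ M, ∀ f ∈ M, e ≠ f → e.1 ≠ f.1 ∧ e.2 ≠ f.2)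

/-- The total weight of a matching. -/
def mWt (w : V → V → ℕ) (M : Finset (V × V)) : ℕ := ∑ e ∈ M, w e.1 e.2

open Classical in
/-- The maximum weight of a matching of the bipartite graph `(X, Y, w)`. -/
noncomputable def mwm (X Y : Finset V) (w : V → V → ℕ) : ℕ :=
  Finset.sup ((Finset.univ : Finset (V × V)).powerset.filter fun M => IsBMatching X Y w M)
    fun M => mWt w M

/-- The minimum weight of a cover of the bipartite graph `(X, Y, w)`. -/
noncomputable def mwc (X Y : Finset V) (w : V → V → ℕ) : ℕ :=
  sInf {n : ℕ | ∃ C : V → ℕ, IsCover X Y w C ∧ coverWt X Y C = n}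

open Classical in
/-- The maximum cardinality of a matching of the bipartite graph `(X, Y, w')`. -/
noncomputable def mmB (X Y : Finset V) (w' : V → V → ℕ) : ℕ :=
  Finset.sup ((Finset.univ : Finset (V × V)).powerset.filter fun M => IsBMatching X Y w' M)
    Finset.card

/-!
Weak duality (a matching weighs at most any cover) gives `mwm G ≤ w(C) + mwm G^Δ_C` for every
vertex function `C`, where `G^Δ_C` is the residual graph of `C`; with `C = C₁` and
`w(C₁) = mm(G₁)` by König–Egerváry this is one inequality. For the other, split an optimal cover
`C` of `G` as `C = D + E` with `D` a cover of `G₁` and `E` a cover of `G^Δ_{C₁}`: then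
`mm(G₁) + mwm G^Δ_{C₁} ≤ w(D) + w(E) = w(C) = mwm G`.
-/

theorem Finset.sum_comp_le_sum_of_injOn {ι κ M : Type*} [AddCommMonoid M] [Preorder M]
    [CanonicallyOrderedAdd M] {s : Finset ι} {t : Finset κ} (f : κ → M) (g : ι → κ)
    (hg : Set.InjOn g s) (hst : Set.MapsTo g s t) :
    ∑ i ∈ s, f (g i) ≤ ∑ j ∈ t, f j := by
  classical
  rw [← Finset.sum_image hg]
  exact Finset.sum_le_sum_of_subset fun _ hj ↦ by
    obtain ⟨i, hi, rfl⟩ := Finset.mem_image.mp hj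
    exact hst hi

section

variable {V : Type*} {X Y : Finset V} {w : V → V → ℕ}

/-- The weights of the residual graph `G^Δ` of `C`; a non-positive difference truncates to `0`,
i.e. to no edge. -/
def residualWt (w : V → V → ℕ) (C : V → ℕ) : V → V → ℕ := fun x y ↦ w x y - C x - C y

theorem isBMatching_empty : IsBMatching X Y w ∅ := by
  constructor <;> simp

namespace IsBMatching

variable {M : Finset (V × V)}

theorem injOn_fst (hM : IsBMatching X Y w M) : Set.InjOn Prod.fst (M : Set (V × V)) :=
  fun e he f hf h ↦ by_contra fun hne ↦ (hM.2 e he f hf hne).1 h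

theorem injOn_snd (hM : IsBMatching X Y w M) : Set.InjOn Prod.snd (M : Set (V × V)) :=
  fun e he f hf h ↦ by_contra fun hne ↦ (hM.2 e he f hf hne).2 h

theorem filter_pos (hM : IsBMatching X Y w M) (w' : V → V → ℕ) :
    IsBMatching X Y w' (M.filter fun e ↦ 0 < w' e.1 e.2) :=
  ⟨fun e he ↦ by
      rw [Finset.mem_filter] at he
      exact ⟨(hM.1 e he.1).1, (hM.1 e he.1).2.1, he.2⟩,
    fun e he f hf ↦ hM.2 e (Finset.mem_filter.mp he).1 f (Finset.mem_filter.mp hf).1⟩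

theorem sum_endpoints_le_coverWt [DecidableEq V] (hXY : Disjoint X Y)
    (hM : IsBMatching X Y w M) (C : V → ℕ) :
    ∑ e ∈ M, (C e.1 + C e.2) ≤ coverWt X Y C :=
  calc ∑ e ∈ M, (C e.1 + C e.2) = ∑ e ∈ M, C e.1 + ∑ e ∈ M, C e.2 := Finset.sum_add_distrib
    _ ≤ ∑ x ∈ X, C x + ∑ y ∈ Y, C y :=
      add_le_add (Finset.sum_comp_le_sum_of_injOn C _ hM.injOn_fst fun e he ↦ (hM.1 e he).1)
        (Finset.sum_comp_le_sum_of_injOn C _ hM.injOn_snd fun e he ↦ (hM.1 e he).2.1)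
    _ = coverWt X Y C := (Finset.sum_union hXY).symm

theorem mWt_le_coverWt [DecidableEq V] (hXY : Disjoint X Y) (hM : IsBMatching X Y w M)
    {C : V → ℕ} (hC : IsCover X Y w C) : mWt w M ≤ coverWt X Y C :=
  (Finset.sum_le_sum fun e he ↦ hC e.1 (hM.1 e he).1 e.2 (hM.1 e he).2.1).trans
    (hM.sum_endpoints_le_coverWt hXY C)

end IsBMatching

theorem coverWt_add [DecidableEq V] (C D : V → ℕ) :
    coverWt X Y (C + D) = coverWt X Y C + coverWt X Y D :=
  Finset.sum_add_distrib

/-- Where `C u ≥ N`, the node `u` can pay `1` for its top edges out of `C u`; elsewhere it pays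
`min (C u) (C₁ u)`. What is left of `C` covers the residual graph of `C₁`. -/
theorem exists_cover_eq_add_top_residualWt {N : ℕ} (hwN : ∀ x ∈ X, ∀ y ∈ Y, w x y ≤ N)
    (hN : 1 ≤ N) {C₁ C : V → ℕ} (hC₁ : IsCover X Y (fun x y ↦ w x y - (N - 1)) C₁)
    (hC : IsCover X Y w C) :
    ∃ D E : V → ℕ, C = D + E ∧ IsCover X Y (fun x y ↦ w x y - (N - 1)) D ∧
      IsCover X Y (residualWt w C₁) E := by
  set D : V → ℕ := fun u ↦ if N ≤ C u then 1 else min (C u) (C₁ u) with hD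
  have hDC : ∀ u, D u ≤ C u := fun u ↦ by
    simp only [hD]
    split_ifs <;> omega
  refine ⟨D, C - D, funext fun u ↦ ?_, fun x hx y hy ↦ ?_, fun x hx y hy ↦ ?_⟩
  · simp only [Pi.add_apply, Pi.sub_apply]
    have := hDC u
    omega
  all_goals
  · have := hC x hx y hy
    have := hC₁ x hx y hy
    have := hwN x hx y hy
    simp only [hD, residualWt, Pi.sub_apply] at *
    split_ifs <;> omega

open Classical in
theorem mem_filter_isBMatching [Fintype V] {M : Finset (V × V)} :
    M ∈ (univ : Finset (V × V)).powerset.filter (fun M ↦ IsBMatching X Y w M) ↔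
      IsBMatching X Y w M := by
  simp

namespace IsBMatching

variable [Fintype V] {M : Finset (V × V)}

theorem mWt_le_mwm (hM : IsBMatching X Y w M) : mWt w M ≤ mwm X Y w :=
  Finset.le_sup (f := fun M ↦ mWt w M) (mem_filter_isBMatching.mpr hM)

theorem mWt_le_mwm_of_reweight (hM : IsBMatching X Y w M) (w' : V → V → ℕ) :
    mWt w' M ≤ mwm X Y w' := by
  have hdrop : mWt w' (M.filter fun e ↦ 0 < w' e.1 e.2) = mWt w' M := by
    simp only [mWt, pos_iff_ne_zero]
    exact Finset.sum_filter_ne_zero M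
  exact hdrop ▸ (hM.filter_pos w').mWt_le_mwm

end IsBMatching

theorem exists_isBMatching_mWt_eq_mwm [Fintype V] (X Y : Finset V) (w : V → V → ℕ) :
    ∃ M, IsBMatching X Y w M ∧ mWt w M = mwm X Y w := by
  obtain ⟨M, hM, hsup⟩ := Finset.exists_mem_eq_sup _
    ⟨∅, mem_filter_isBMatching.mpr isBMatching_empty⟩ fun M ↦ mWt w M
  exact ⟨M, mem_filter_isBMatching.mp hM, hsup.symm⟩

theorem mwm_eq_mmB_of_le_one [Fintype V] (hw : ∀ x ∈ X, ∀ y ∈ Y, w x y ≤ 1) :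
    mwm X Y w = mmB X Y w := by
  refine Finset.sup_congr rfl fun M hM ↦ ?_
  replace hM := mem_filter_isBMatching.mp hM
  calc mWt w M = ∑ _e ∈ M, 1 :=
        Finset.sum_congr rfl fun e he ↦ le_antisymm (hw _ (hM.1 e he).1 _ (hM.1 e he).2.1)
          (hM.1 e he).2.2
    _ = M.card := (Finset.card_eq_sum_ones M).symm

variable [Fintype V] [DecidableEq V]

theorem mwm_le_coverWt (hXY : Disjoint X Y) {C : V → ℕ} (hC : IsCover X Y w C) :
    mwm X Y w ≤ coverWt X Y C :=
  Finset.sup_le fun _ hM ↦ (mem_filter_isBMatching.mp hM).mWt_le_coverWt hXY hC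

theorem coverWt_eq_mwm_of_minimal (hXY : Disjoint X Y) {C : V → ℕ} (hC : IsCover X Y w C)
    (hmin : ∀ C', IsCover X Y w C' → coverWt X Y C ≤ coverWt X Y C')
    (hKE : ∃ (C' : V → ℕ) (M : Finset (V × V)),
      IsCover X Y w C' ∧ IsBMatching X Y w M ∧ mWt w M = coverWt X Y C') :
    coverWt X Y C = mwm X Y w := by
  obtain ⟨C', M, hC', hM, hMC'⟩ := hKE
  exact le_antisymm ((hmin C' hC').trans (hMC' ▸ hM.mWt_le_mwm)) (mwm_le_coverWt hXY hC)

theorem mwm_le_coverWt_add_mwm_residualWt (hXY : Disjoint X Y) (C : V → ℕ) :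
    mwm X Y w ≤ coverWt X Y C + mwm X Y (residualWt w C) := by
  obtain ⟨M, hM, hMw⟩ := exists_isBMatching_mWt_eq_mwm X Y w
  calc mwm X Y w = ∑ e ∈ M, w e.1 e.2 := hMw.symm
    _ ≤ ∑ e ∈ M, ((C e.1 + C e.2) + residualWt w C e.1 e.2) :=
      Finset.sum_le_sum fun e _ ↦ by simp only [residualWt]; omega
    _ = ∑ e ∈ M, (C e.1 + C e.2) + mWt (residualWt w C) M := Finset.sum_add_distrib
    _ ≤ coverWt X Y C + mwm X Y (residualWt w C) :=
      add_le_add (hM.sum_endpoints_le_coverWt hXY C) (hM.mWt_le_mwm_of_reweight _)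

end

theorem decomposition_h_one_general
    (X Y : Finset V) (hXY : Disjoint X Y) (w : V → V → ℕ) (N : ℕ)
    (hwN : ∀ x ∈ X, ∀ y ∈ Y, w x y ≤ N)
    (hN1 : 1 ≤ N)
    (C1 : V → ℕ)
    (hC1 : IsCover X Y (fun x y => w x y - (N - 1)) C1)
    (hC1min : ∀ C' : V → ℕ, IsCover X Y (fun x y => w x y - (N - 1)) C' →
      coverWt X Y C1 ≤ coverWt X Y C')
    (hKE : ∀ w' : V → V → ℕ, ∃ (C : V → ℕ) (M : Finset (V × V)),
      IsCover X Y w' C ∧ IsBMatching X Y w' M ∧ mWt w' M = coverWt X Y C) :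
    mwm X Y w =
      mmB X Y (fun x y => w x y - (N - 1)) +
      mwm X Y (fun x y => w x y - C1 x - C1 y) := by
  have hC1wt : coverWt X Y C1 = mmB X Y (fun x y => w x y - (N - 1)) := by
    rw [coverWt_eq_mwm_of_minimal hXY hC1 hC1min (hKE _)]
    exact mwm_eq_mmB_of_le_one fun x hx y hy ↦ by have := hwN x hx y hy; omega
  refine le_antisymm (hC1wt ▸ mwm_le_coverWt_add_mwm_residualWt hXY C1) ?_
  obtain ⟨C, M, hC, hM, hMC⟩ := hKE w
  obtain ⟨D, E, rfl, hD, hE⟩ := exists_cover_eq_add_top_residualWt hwN hN1 hC1 hC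
  calc mmB X Y (fun x y => w x y - (N - 1)) + mwm X Y (residualWt w C1)
      = coverWt X Y C1 + mwm X Y (residualWt w C1) := by rw [hC1wt]
    _ ≤ coverWt X Y D + coverWt X Y E := add_le_add (hC1min D hD) (mwm_le_coverWt hXY hE)
    _ = mWt w M := by rw [hMC, coverWt_add]
    _ ≤ mwm X Y w := hM.mWt_le_mwm

/-- Decomposition with `h = 1`: `mwm(G) = mm(G_1) + mwm(G_1^Δ)`, where `G_1`
consists of the maximum-weight edges of `G` with weight 1 (i.e. weights
`w(u,v) - (N-1)`, truncated), `C_1` is a minimum weight cover of `G_1` and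
`G_1^Δ` is the residual graph with weights `w(u,v) - C_1(u) - C_1(v)`. -/
theorem decomposition_h_one
    (X Y : Finset V) (hXY : Disjoint X Y) (w : V → V → ℕ) (N : ℕ)
    (hwN : ∀ x ∈ X, ∀ y ∈ Y, w x y ≤ N) (hNmax : ∃ x ∈ X, ∃ y ∈ Y, w x y = N)
    (hN1 : 1 ≤ N)
    (C1 : V → ℕ)
    (hC1 : IsCover X Y (fun x y => w x y - (N - 1)) C1)
    (hC1min : ∀ C' : V → ℕ, IsCover X Y (fun x y => w x y - (N - 1)) C' →
      coverWt X Y C1 ≤ coverWt X Y C')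
    (hKE : ∀ w' : V → V → ℕ, ∃ (C : V → ℕ) (M : Finset (V × V)),
      IsCover X Y w' C ∧ IsBMatching X Y w' M ∧ mWt w' M = coverWt X Y C) :
    mwm X Y w =
      mmB X Y (fun x y => w x y - (N - 1)) +
      mwm X Y (fun x y => w x y - C1 x - C1 y) :=
  decomposition_h_one_general X Y hXY w N hwN hN1 C1 hC1 hC1min hKE
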